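/- Given two positive C-RASP programs P and P' with L(P) ≠ L(P'), there exists a distinguishing string (a string in the symmetric difference of L(P) and L(P')) of length at most exponential in |P| + |P'|. -/

import Mathlib

/-!
In a positive program every counting term is monotone along the word. Cap each compared term
at a bound `K` above all constants: the sum of the capped values (the potential) is monotone
with at most `|φ| · K + 1` values, so on a longer word it stalls between some positions `q` and
`q + 1`. There every compared term either does not move or is already at least `K`, so deleting
letter `q + 1` changes no comparison at later positions, hence not membership. Iterating gives a
word of length at most `|φ| · 2 ^ |φ| + 1` in every nonempty positive language; apply this to
the symmetric-difference program `(P ∧ ¬P') ∨ (¬P ∧ P')`.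
-/

inductive CmpOp : Type
  | lt | le | eq | ge | gt

def CmpOp.holds : CmpOp → ℤ → ℤ → Bool
  | .lt, x, y => decide (x < y)
  | .le, x, y => decide (x ≤ y)
  | .eq, x, y => decide (x = y)
  | .ge, x, y => decide (y ≤ x)
  | .gt, x, y => decide (y < x)

mutual
inductive CForm (α : Type) : Type
  | sym : α → CForm α
  | not : CForm α → CForm α
  | and : CForm α → CForm α → CForm α
  | prev : CForm α → CForm α
  | hist : CForm α → CForm α
  | cmp : CTerm α → CmpOp → ℤ → CForm α
inductive CTerm (α : Type) : Type
  | const : ℤ → CTerm α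
  | cnt : CForm α → CTerm α
  | add : CTerm α → CTerm α → CTerm α
  | smul : ℤ → CTerm α → CTerm α
end

mutual
def CForm.eval {α : Type} [DecidableEq α] : CForm α → List α → ℕ → Bool
  | .sym a, w, i => w[i - 1]? == some a
  | .not φ, w, i => !(φ.eval w i)
  | .and φ ψ, w, i => φ.eval w i && ψ.eval w i
  | .prev φ, w, i => ((List.range i).filter (fun j => 0 < j)).any (fun j => φ.eval w j)
  | .hist φ, w, i => ((List.range (i + 1)).filter (fun j => 0 < j)).all (fun j => φ.eval w j)
  | .cmp t op k, w, i => op.holds (t.eval w i) k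
def CTerm.eval {α : Type} [DecidableEq α] : CTerm α → List α → ℕ → ℤ
  | .const c, _, _ => c
  | .cnt φ, w, i =>
      ((((List.range (i + 1)).filter (fun j => 0 < j)).countP (fun j => φ.eval w j) : ℕ) : ℤ)
  | .add t u, w, i => t.eval w i + u.eval w i
  | .smul a t, w, i => a * t.eval w i
end

def CForm.lang {α : Type} [DecidableEq α] (φ : CForm α) : Set (List α) :=
  {w | φ.eval w w.length = true}

mutual
def CForm.depth {α : Type} : CForm α → ℕ
  | .sym _ => 0
  | .not φ => φ.depth
  | .and φ ψ => max φ.depth ψ.depth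
  | .prev φ => φ.depth + 1
  | .hist φ => φ.depth + 1
  | .cmp t _ _ => t.depth
def CTerm.depth {α : Type} : CTerm α → ℕ
  | .const _ => 0
  | .cnt φ => φ.depth + 1
  | .add t u => max t.depth u.depth
  | .smul _ t => t.depth
end

def trueF {α : Type} : CForm α := .cmp (.const 0) .eq 0

def conjList {α : Type} (l : List (CForm α)) : CForm α := l.foldr .and trueF


/-- Number of bits of an integer constant (constants are encoded in binary). -/
def zsize (z : ℤ) : ℕ := Nat.log 2 z.natAbs + 1

mutual
/-- Size of a formula, with constants counted in binary. -/
def CForm.size {α : Type} : CForm α → ℕ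
  | .sym _ => 1
  | .not φ => φ.size + 1
  | .and φ ψ => φ.size + ψ.size + 1
  | .prev φ => φ.size + 1
  | .hist φ => φ.size + 1
  | .cmp t _ k => t.size + zsize k + 1
def CTerm.size {α : Type} : CTerm α → ℕ
  | .const c => zsize c + 1
  | .cnt φ => φ.size + 1
  | .add t u => t.size + u.size + 1
  | .smul a t => zsize a + t.size + 1
end

mutual
/-- Precision: number of bits of the largest constant occurring. -/
def CForm.prec {α : Type} : CForm α → ℕ
  | .sym _ => 0
  | .not φ => φ.prec
  | .and φ ψ => max φ.prec ψ.prec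
  | .prev φ => φ.prec
  | .hist φ => φ.prec
  | .cmp t _ k => max t.prec (zsize k)
def CTerm.prec {α : Type} : CTerm α → ℕ
  | .const c => zsize c
  | .cnt φ => φ.prec
  | .add t u => max t.prec u.prec
  | .smul a t => max (zsize a) t.prec
end

/-- Number of summands of a term. -/
def CTerm.summands {α : Type} : CTerm α → ℕ
  | .const _ => 1
  | .cnt _ => 1
  | .add t u => t.summands + u.summands
  | .smul _ t => t.summands

mutual
/-- Girth: the maximum number of summands occurring in any sum. -/
def CForm.girth {α : Type} : CForm α → ℕ
  | .sym _ => 0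
  | .not φ => φ.girth
  | .and φ ψ => max φ.girth ψ.girth
  | .prev φ => φ.girth
  | .hist φ => φ.girth
  | .cmp t _ _ => max t.girthIn t.summands
def CTerm.girthIn {α : Type} : CTerm α → ℕ
  | .const _ => 0
  | .cnt φ => φ.girth
  | .add t u => max t.girthIn u.girthIn
  | .smul _ t => t.girthIn
end

mutual
/-- The positive fragment C-RASP₊: no temporal operators, and all coefficients and
constants are natural numbers. -/
def CForm.Positive {α : Type} : CForm α → Prop
  | .sym _ => True
  | .not φ => φ.Positive
  | .and φ ψ => φ.Positive ∧ ψ.Positive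
  | .prev _ => False
  | .hist _ => False
  | .cmp t _ k => t.Positive ∧ 0 ≤ k
def CTerm.Positive {α : Type} : CTerm α → Prop
  | .const c => 0 ≤ c
  | .cnt φ => φ.Positive
  | .add t u => t.Positive ∧ u.Positive
  | .smul a t => 0 ≤ a ∧ t.Positive
end

/-- Formulas of the unary past temporal logic TL[◆]. -/
inductive TForm (α : Type) : Type
  | sym : α → TForm α
  | not : TForm α → TForm α
  | and : TForm α → TForm α → TForm α
  | prev : TForm α → TForm α
  | hist : TForm α → TForm α

def TForm.eval {α : Type} [DecidableEq α] : TForm α → List α → ℕ → Bool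
  | .sym a, w, i => w[i - 1]? == some a
  | .not φ, w, i => !(φ.eval w i)
  | .and φ ψ, w, i => φ.eval w i && ψ.eval w i
  | .prev φ, w, i => ((List.range i).filter (fun j => 0 < j)).any (fun j => φ.eval w j)
  | .hist φ, w, i => ((List.range (i + 1)).filter (fun j => 0 < j)).all (fun j => φ.eval w j)

def TForm.lang {α : Type} [DecidableEq α] (φ : TForm α) : Set (List α) :=
  {w | φ.eval w w.length = true}

def TForm.size {α : Type} : TForm α → ℕ
  | .sym _ => 1
  | .not φ => φ.size + 1
  | .and φ ψ => φ.size + ψ.size + 1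
  | .prev φ => φ.size + 1
  | .hist φ => φ.size + 1

section CmpTerms
variable {α : Type}

mutual
def CForm.cmpTerms : CForm α → List (CTerm α × ℤ)
  | .sym _ => []
  | .not φ => φ.cmpTerms
  | .and φ ψ => φ.cmpTerms ++ ψ.cmpTerms
  | .prev φ => φ.cmpTerms
  | .hist φ => φ.cmpTerms
  | .cmp t _ k => (t, k) :: t.cmpTerms
def CTerm.cmpTerms : CTerm α → List (CTerm α × ℤ)
  | .const _ => []
  | .cnt φ => φ.cmpTerms
  | .add t u => t.cmpTerms ++ u.cmpTerms
  | .smul _ t => t.cmpTerms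
end

mutual
theorem CForm.length_cmpTerms_le_size : ∀ φ : CForm α, φ.cmpTerms.length ≤ φ.size
  | .sym _ => by simp [CForm.cmpTerms]
  | .not φ | .prev φ | .hist φ => by
      have := φ.length_cmpTerms_le_size
      simp only [CForm.cmpTerms, CForm.size]; omega
  | .and φ ψ => by
      have := φ.length_cmpTerms_le_size
      have := ψ.length_cmpTerms_le_size
      simp only [CForm.cmpTerms, CForm.size, List.length_append]; omega
  | .cmp t _ _ => by
      have := t.length_cmpTerms_le_size
      simp only [CForm.cmpTerms, CForm.size, List.length_cons]; omega
theorem CTerm.length_cmpTerms_le_size : ∀ t : CTerm α, t.cmpTerms.length ≤ t.size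
  | .const _ => by simp [CTerm.cmpTerms]
  | .cnt φ => by
      have := φ.length_cmpTerms_le_size
      simp only [CTerm.cmpTerms, CTerm.size]; omega
  | .add t u => by
      have := t.length_cmpTerms_le_size
      have := u.length_cmpTerms_le_size
      simp only [CTerm.cmpTerms, CTerm.size, List.length_append]; omega
  | .smul _ t => by
      have := t.length_cmpTerms_le_size
      simp only [CTerm.cmpTerms, CTerm.size]; omega
end

mutual
theorem CForm.zsize_le_size_of_mem_cmpTerms :
    ∀ (φ : CForm α), ∀ tk ∈ φ.cmpTerms, zsize tk.2 ≤ φ.size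
  | .sym _, _, h => by simp [CForm.cmpTerms] at h
  | .not φ, tk, h | .prev φ, tk, h | .hist φ, tk, h => by
      have := φ.zsize_le_size_of_mem_cmpTerms tk h
      simp only [CForm.size]; omega
  | .and φ ψ, tk, h => by
      simp only [CForm.cmpTerms, List.mem_append] at h
      have := φ.zsize_le_size_of_mem_cmpTerms tk
      have := ψ.zsize_le_size_of_mem_cmpTerms tk
      simp only [CForm.size]; rcases h with h | h <;> grind
  | .cmp t _ k, tk, h => by
      simp only [CForm.cmpTerms, List.mem_cons] at h
      have := t.zsize_le_size_of_mem_cmpTerms tk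
      simp only [CForm.size]; rcases h with rfl | h <;> grind
theorem CTerm.zsize_le_size_of_mem_cmpTerms :
    ∀ (t : CTerm α), ∀ tk ∈ t.cmpTerms, zsize tk.2 ≤ t.size
  | .const _, _, h => by simp [CTerm.cmpTerms] at h
  | .cnt φ, tk, h => by
      have := φ.zsize_le_size_of_mem_cmpTerms tk h
      simp only [CTerm.size]; omega
  | .add t u, tk, h => by
      simp only [CTerm.cmpTerms, List.mem_append] at h
      have := t.zsize_le_size_of_mem_cmpTerms tk
      have := u.zsize_le_size_of_mem_cmpTerms tk
      simp only [CTerm.size]; rcases h with h | h <;> grind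
  | .smul _ t, tk, h => by
      have := t.zsize_le_size_of_mem_cmpTerms tk h
      simp only [CTerm.size]; omega
end

theorem lt_two_pow_zsize (k : ℤ) : k < 2 ^ zsize k :=
  calc k ≤ k.natAbs := Int.le_natAbs
    _ < 2 ^ zsize k := mod_cast Nat.lt_pow_succ_log_self one_lt_two k.natAbs

end CmpTerms

section Positive
variable {α : Type}

mutual
theorem CForm.Positive.of_mem_cmpTerms :
    ∀ {φ : CForm α}, φ.Positive → ∀ tk ∈ φ.cmpTerms, tk.1.Positive ∧ 0 ≤ tk.2
  | .sym _, _, _, h => by simp [CForm.cmpTerms] at h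
  | .not φ, hφ, tk, h => CForm.Positive.of_mem_cmpTerms (φ := φ) hφ tk h
  | .prev _, hφ, _, _ | .hist _, hφ, _, _ => hφ.elim
  | .and _ _, hφ, tk, h => by
      rcases List.mem_append.1 h with h | h
      · exact hφ.1.of_mem_cmpTerms tk h
      · exact hφ.2.of_mem_cmpTerms tk h
  | .cmp _ _ _, hφ, tk, h => by
      rcases List.mem_cons.1 h with rfl | h
      · exact hφ
      · exact hφ.1.of_mem_cmpTerms tk h
theorem CTerm.Positive.of_mem_cmpTerms :
    ∀ {t : CTerm α}, t.Positive → ∀ tk ∈ t.cmpTerms, tk.1.Positive ∧ 0 ≤ tk.2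
  | .const _, _, _, h => by simp [CTerm.cmpTerms] at h
  | .cnt φ, ht, tk, h => CForm.Positive.of_mem_cmpTerms (φ := φ) ht tk h
  | .add _ _, ht, tk, h => by
      rcases List.mem_append.1 h with h | h
      · exact ht.1.of_mem_cmpTerms tk h
      · exact ht.2.of_mem_cmpTerms tk h
  | .smul _ _, ht, tk, h => ht.2.of_mem_cmpTerms tk h
end

end Positive

section Eval
variable {α : Type} [DecidableEq α]

theorem CTerm.eval_cnt_succ (φ : CForm α) (w : List α) (i : ℕ) :
    (CTerm.cnt φ).eval w (i + 1) = (CTerm.cnt φ).eval w i + if φ.eval w (i + 1) then 1 else 0 := by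
  simp only [CTerm.eval, List.range_succ, List.filter_append, List.countP_append]
  split_ifs <;> simp [*]

theorem CTerm.monotone_eval : ∀ t : CTerm α, t.Positive → ∀ w, Monotone (t.eval w)
  | .const _, _, _ => monotone_const
  | .cnt φ, _, w => monotone_nat_of_le_succ fun i => by
      rw [CTerm.eval_cnt_succ]; split_ifs <;> simp
  | .add t u, ht, w => (t.monotone_eval ht.1 w).add (u.monotone_eval ht.2 w)
  | .smul _ t, ht, w => (t.monotone_eval ht.2 w).const_mul ht.1

theorem CTerm.eval_nonneg : ∀ t : CTerm α, t.Positive → ∀ w i, 0 ≤ t.eval w i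
  | .const _, ht, _, _ => ht
  | .cnt _, _, _, _ => by simp only [CTerm.eval]; positivity
  | .add t u, ht, w, i => add_nonneg (t.eval_nonneg ht.1 w i) (u.eval_nonneg ht.2 w i)
  | .smul _ t, ht, w, i => mul_nonneg ht.1 (t.eval_nonneg ht.2 w i)

mutual
theorem CForm.eval_congr_prefix {w v : List α} :
    ∀ (φ : CForm α) {j : ℕ}, 0 < j → (∀ i < j, w[i]? = v[i]?) → φ.eval w j = φ.eval v j
  | .sym _, j, hj, h => by simp only [CForm.eval, h (j - 1) (by omega)]
  | .not φ, j, hj, h => by simp only [CForm.eval, φ.eval_congr_prefix hj h]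
  | .and φ ψ, j, hj, h => by
      simp only [CForm.eval, φ.eval_congr_prefix hj h, ψ.eval_congr_prefix hj h]
  | .prev φ, j, hj, h => by
      simp only [CForm.eval]
      rw [Bool.eq_iff_iff]
      simp only [List.any_eq_true, List.mem_filter, List.mem_range, decide_eq_true_eq]
      refine exists_congr fun i => and_congr_right fun hi => ?_
      rw [φ.eval_congr_prefix hi.2 fun i' hi' => h i' (by omega)]
  | .hist φ, j, hj, h => by
      simp only [CForm.eval]
      rw [Bool.eq_iff_iff]
      simp only [List.all_eq_true, List.mem_filter, List.mem_range, decide_eq_true_eq]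
      refine forall_congr' fun i => imp_congr_right fun hi => ?_
      rw [φ.eval_congr_prefix hi.2 fun i' hi' => h i' (by omega)]
  | .cmp t _ _, j, _, h => by simp only [CForm.eval, t.eval_congr_prefix h]
theorem CTerm.eval_congr_prefix {w v : List α} :
    ∀ (t : CTerm α) {j : ℕ}, (∀ i < j, w[i]? = v[i]?) → t.eval w j = t.eval v j
  | .const _, _, _ => rfl
  | .cnt φ, j, h => by
      simp only [CTerm.eval]
      congr 1
      refine List.countP_congr fun i hi => ?_
      simp only [List.mem_filter, List.mem_range, decide_eq_true_eq] at hi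
      rw [φ.eval_congr_prefix hi.2 fun i' hi' => h i' (by omega)]
  | .add t u, _, h => by simp only [CTerm.eval, t.eval_congr_prefix h, u.eval_congr_prefix h]
  | .smul _ t, _, h => by simp only [CTerm.eval, t.eval_congr_prefix h]
end

end Eval

theorem CmpOp.holds_eq_of_le {K k x y : ℤ} (op : CmpOp) (hk : k < K) (hx : K ≤ x) (hy : K ≤ y) :
    op.holds x k = op.holds y k := by
  cases op <;> simp only [CmpOp.holds, decide_eq_decide] <;> omega

section Erase
variable {α : Type} [DecidableEq α]

def CForm.InertAt (w : List α) (K : ℤ) (q : ℕ) (φ : CForm α) : Prop :=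
  ∀ tk ∈ φ.cmpTerms, tk.2 < K ∧ min (tk.1.eval w q) K = min (tk.1.eval w (q + 1)) K

def CTerm.InertAt (w : List α) (K : ℤ) (q : ℕ) (t : CTerm α) : Prop :=
  ∀ tk ∈ t.cmpTerms, tk.2 < K ∧ min (tk.1.eval w q) K = min (tk.1.eval w (q + 1)) K

variable {w : List α} {K : ℤ} {q : ℕ}

mutual
-- Positions are 1-based (`CForm.eval` reads `w[j - 1]` at `j`), so `w.eraseIdx q` deletes the
-- letter at position `q + 1`.
theorem CForm.eval_eraseIdx :
    ∀ (φ : CForm α), φ.Positive → φ.InertAt w K q →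
      ∀ {j : ℕ}, q < j → φ.eval (w.eraseIdx q) j = φ.eval w (j + 1)
  | .sym _, _, _, j, hj => by
      simp only [CForm.eval, List.getElem?_eraseIdx_of_ge (show q ≤ j - 1 by omega),
        Nat.sub_add_cancel (show 1 ≤ j by omega), Nat.add_sub_cancel]
  | .not φ, hφ, h, j, hj => by simp only [CForm.eval, φ.eval_eraseIdx hφ h hj]
  | .and φ ψ, hφ, h, j, hj => by
      simp only [CForm.eval,
        φ.eval_eraseIdx hφ.1 (fun tk htk => h tk (List.mem_append_left _ htk)) hj,
        ψ.eval_eraseIdx hφ.2 (fun tk htk => h tk (List.mem_append_right _ htk)) hj]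
  | .cmp t op k, hφ, h, j, hj => by
      obtain ⟨hk, hcap⟩ : k < K ∧ min (t.eval w q) K = min (t.eval w (q + 1)) K :=
        h (t, k) List.mem_cons_self
      have hshift (j : ℕ) (hj : q ≤ j) :=
        t.eval_eraseIdx hφ.1 (fun tk htk => h tk (List.mem_cons_of_mem _ htk)) hj
      have hmono := t.monotone_eval hφ.1
      simp only [CForm.eval]
      by_cases hsat : K ≤ t.eval w q
      · refine op.holds_eq_of_le hk ?_ (hsat.trans (hmono w (by omega)))
        have := hshift q le_rfl
        linarith [hmono (w.eraseIdx q) hj.le]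
      · have hstep : t.eval w (q + 1) = t.eval w q := by
          have := hmono w (show q ≤ q + 1 by omega)
          rw [min_eq_left (by omega)] at hcap
          omega
        have := hshift j hj.le
        rw [show t.eval (w.eraseIdx q) j = t.eval w (j + 1) by omega]
theorem CTerm.eval_eraseIdx :
    ∀ (t : CTerm α), t.Positive → t.InertAt w K q →
      ∀ {j : ℕ}, q ≤ j →
        t.eval (w.eraseIdx q) j + t.eval w (q + 1) = t.eval w (j + 1) + t.eval w q
  | .const _, _, _, _, _ => by simp only [CTerm.eval]
  | .cnt φ, hφ, h, j, hj => by
      induction j, hj using Nat.le_induction with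
      | base =>
          rw [(CTerm.cnt φ).eval_congr_prefix fun _ => List.getElem?_eraseIdx_of_lt]
          ring
      | succ j hj ih =>
          rw [CTerm.eval_cnt_succ, CTerm.eval_cnt_succ φ w (j + 1),
            φ.eval_eraseIdx hφ h (Nat.lt_succ_of_le hj)]
          linarith
  | .add t u, ht, h, j, hj => by
      have := t.eval_eraseIdx ht.1 (fun tk htk => h tk (List.mem_append_left _ htk)) hj
      have := u.eval_eraseIdx ht.2 (fun tk htk => h tk (List.mem_append_right _ htk)) hj
      simp only [CTerm.eval]
      linarith
  | .smul a t, ht, h, j, hj => by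
      simp only [CTerm.eval]
      linear_combination a * t.eval_eraseIdx ht.2 h hj
end

end Erase

theorem Monotone.exists_eq_succ_of_lt_add {f : ℕ → ℤ} (hf : Monotone f) {n : ℕ}
    (h : f n < f 0 + n) : ∃ p < n, f p = f (p + 1) := by
  by_contra! hne
  have grow : ∀ m ≤ n, f 0 + m ≤ f m := by
    intro m hm
    induction m with
    | zero => simp
    | succ m ih =>
        have := (hf m.le_succ).lt_of_ne (hne m (by omega))
        push_cast
        linarith [ih (by omega)]
  linarith [grow n le_rfl]

section Potential
variable {α : Type} [DecidableEq α] {φ : CForm α} {w : List α} {K : ℤ}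

def CForm.potential (w : List α) (K : ℤ) (φ : CForm α) (j : ℕ) : ℤ :=
  (φ.cmpTerms.map fun tk => min (tk.1.eval w j) K).sum

theorem CForm.monotone_potential (hφ : φ.Positive) : Monotone (φ.potential w K) :=
  fun _ _ hij => List.sum_le_sum fun tk htk =>
    min_le_min_right K (tk.1.monotone_eval (hφ.of_mem_cmpTerms tk htk).1 w hij)

theorem CForm.potential_nonneg (hφ : φ.Positive) (hK : 0 ≤ K) (j : ℕ) :
    0 ≤ φ.potential w K j :=
  List.sum_nonneg fun x hx => by
    obtain ⟨tk, htk, rfl⟩ := List.mem_map.1 hx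
    exact le_min (tk.1.eval_nonneg (hφ.of_mem_cmpTerms tk htk).1 w j) hK

theorem CForm.potential_le (j : ℕ) : φ.potential w K j ≤ φ.cmpTerms.length * K := by
  have := List.sum_le_card_nsmul (φ.cmpTerms.map fun tk => min (tk.1.eval w j) K) K fun x hx => by
    obtain ⟨tk, -, rfl⟩ := List.mem_map.1 hx
    exact min_le_right _ K
  simpa [CForm.potential] using this

theorem CForm.inertAt_of_potential_eq (hφ : φ.Positive) (hK : ∀ tk ∈ φ.cmpTerms, tk.2 < K)
    {q : ℕ} (h : φ.potential w K q = φ.potential w K (q + 1)) : φ.InertAt w K q := by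
  refine fun tk htk => ⟨hK tk htk, ?_⟩
  by_contra hne
  refine h.not_lt (List.sum_lt_sum _ _ (fun tk htk => ?_) ⟨tk, htk, ?_⟩)
  all_goals
    have := tk.1.monotone_eval (hφ.of_mem_cmpTerms tk htk).1 w (show q ≤ q + 1 by omega)
  · exact min_le_min_right K this
  · exact (min_le_min_right K this).lt_of_ne hne

theorem CForm.exists_eraseIdx_mem_lang_iff (hφ : φ.Positive) (hK : ∀ tk ∈ φ.cmpTerms, tk.2 < K)
    (hK₀ : 0 ≤ K) (hw : (φ.cmpTerms.length * K + 1 : ℤ) < w.length) :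
    ∃ q, q + 1 < w.length ∧ (w.eraseIdx q ∈ φ.lang ↔ w ∈ φ.lang) := by
  have hlen : 0 < w.length := by
    have := mul_nonneg (Nat.cast_nonneg φ.cmpTerms.length) hK₀
    omega
  obtain ⟨q, hq, hstall⟩ := (φ.monotone_potential hφ (w := w) (K := K)).exists_eq_succ_of_lt_add
    (n := w.length - 1) (by
      have := φ.potential_le (w := w) (K := K) (w.length - 1)
      have := φ.potential_nonneg hφ hK₀ (w := w) 0
      push_cast [Nat.cast_sub hlen]
      linarith)
  refine ⟨q, by omega, ?_⟩
  have hev := φ.eval_eraseIdx hφ (φ.inertAt_of_potential_eq hφ hK hstall) hq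
  simp only [CForm.lang, Set.mem_ofPred_eq, List.length_eraseIdx_of_lt (show q < w.length by omega),
    hev, Nat.sub_add_cancel hlen]

theorem CForm.exists_mem_lang_length_le (hφ : φ.Positive) (hne : φ.lang.Nonempty) :
    ∃ w ∈ φ.lang, w.length ≤ φ.size * 2 ^ φ.size + 1 := by
  obtain ⟨w, hw⟩ := hne
  induction hn : w.length using Nat.strong_induction_on generalizing w with
  | _ n ih =>
    by_cases hshort : w.length ≤ φ.size * 2 ^ φ.size + 1
    · exact ⟨w, hw, hshort⟩
    have hK (tk) (htk : tk ∈ φ.cmpTerms) : tk.2 < 2 ^ φ.size :=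
      (lt_two_pow_zsize tk.2).trans_le
        (pow_le_pow_right₀ one_le_two (φ.zsize_le_size_of_mem_cmpTerms tk htk))
    have hlong : φ.cmpTerms.length * 2 ^ φ.size + 1 < w.length :=
      lt_of_le_of_lt (by gcongr; exact φ.length_cmpTerms_le_size) (not_le.1 hshort)
    obtain ⟨q, hq, hiff⟩ :=
      φ.exists_eraseIdx_mem_lang_iff hφ hK (by positivity) (mod_cast hlong)
    exact ih _ (by rw [List.length_eraseIdx_of_lt (by omega)]; omega) _ (hiff.2 hw) rfl

end Potential

section Xor
variable {α : Type}

def CForm.or (φ ψ : CForm α) : CForm α := .not (.and (.not φ) (.not ψ))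

def CForm.xor (φ ψ : CForm α) : CForm α := (φ.and ψ.not).or (φ.not.and ψ)

theorem CForm.Positive.xor {φ ψ : CForm α} (hφ : φ.Positive) (hψ : ψ.Positive) :
    (φ.xor ψ).Positive := by
  simp only [CForm.xor, CForm.or, CForm.Positive]
  exact ⟨⟨hφ, hψ⟩, hφ, hψ⟩

theorem CForm.size_xor (φ ψ : CForm α) : (φ.xor ψ).size = 2 * (φ.size + ψ.size) + 8 := by
  simp only [CForm.xor, CForm.or, CForm.size]
  ring

theorem CForm.lang_xor [DecidableEq α] (φ ψ : CForm α) :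
    (φ.xor ψ).lang = symmDiff φ.lang ψ.lang := by
  ext w
  simp only [CForm.lang, CForm.xor, CForm.or, CForm.eval, Set.mem_symmDiff, Set.mem_ofPred_eq]
  cases φ.eval w w.length <;> cases ψ.eval w w.length <;> simp

end Xor

theorem Nat.mul_two_pow_add_one_le (n : ℕ) : n * 2 ^ n + 1 ≤ 2 ^ (2 * n) :=
  calc n * 2 ^ n + 1 ≤ (n + 1) * 2 ^ n := by nlinarith [Nat.one_le_two_pow (n := n)]
    _ ≤ 2 ^ n * 2 ^ n := Nat.mul_le_mul_right _ Nat.lt_two_pow_self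
    _ = 2 ^ (2 * n) := by rw [← pow_add, two_mul]

/-- Two positive C-RASP programs with different languages are distinguished by a string
(in the symmetric difference of their languages) of length at most exponential in the
sum of their sizes. -/
theorem crasp_pos_distinguishing_string :
    ∃ c : ℕ, ∀ (α : Type) [DecidableEq α] (P P' : CForm α),
      P.Positive → P'.Positive → CForm.lang P ≠ CForm.lang P' →
      ∃ w : List α, (w ∈ CForm.lang P ↔ w ∉ CForm.lang P') ∧
        w.length ≤ 2 ^ (c * (P.size + P'.size + 1) ^ c) := by
  refine ⟨16, fun α _ P P' hP hP' hne => ?_⟩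
  obtain ⟨w, hw, hlen⟩ := CForm.exists_mem_lang_length_le (hP.xor hP')
    (by rwa [CForm.lang_xor, Set.symmDiff_nonempty])
  refine ⟨w, by rw [CForm.lang_xor, Set.mem_symmDiff] at hw; tauto, ?_⟩
  rw [CForm.size_xor] at hlen
  calc w.length ≤ 2 ^ (2 * (2 * (P.size + P'.size) + 8)) :=
        hlen.trans (Nat.mul_two_pow_add_one_le _)
    _ ≤ 2 ^ (16 * (P.size + P'.size + 1) ^ 16) := Nat.pow_le_pow_right two_pos <| by
        nlinarith [Nat.le_self_pow (by norm_num : 16 ≠ 0) (P.size + P'.size + 1)]
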